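/- Let M and N be p-typical Cartier modules and let Q be a p-typical Cartier module. Then Cartier module homomorphisms M ⊠ N → Q are in natural bijection with (V,F)-bilinear maps M × N → Q, i.e. biadditive maps (−,−) satisfying F(x,y) = (F x, F y), V(x, F y) = (V x, y), and V(F x, y) = (x, V y) for all x ∈ M, y ∈ N. The bijection sends a homomorphism φ to the pairing (x,y) = φ((x ⊗ y)V^0). -/
import Mathlib


open scoped TensorProduct

section Box

variable {M N : Type*} [AddCommGroup M] [AddCommGroup N]

/-- The subgroup of relations defining the Cartier module tensor product `M ⊠ N`. -/
noncomputable def boxRel (FM VM : M →+ M) (FN VN : N →+ N) :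
    AddSubgroup (ℕ →₀ TensorProduct ℤ M N) :=
  AddSubgroup.closure
    ({x | ∃ (m : M) (n : N) (k : ℕ),
        x = Finsupp.single k (m ⊗ₜ[ℤ] VN n) - Finsupp.single (k + 1) (FM m ⊗ₜ[ℤ] n)} ∪
     {x | ∃ (m : M) (n : N) (k : ℕ),
        x = Finsupp.single k (VM m ⊗ₜ[ℤ] n) - Finsupp.single (k + 1) (m ⊗ₜ[ℤ] FN n)})

/-- The Verschiebung on `⊕_{k≥0} (M ⊗ N)·Vᵏ`: the shift. -/
noncomputable def boxV : (ℕ →₀ TensorProduct ℤ M N) → (ℕ →₀ TensorProduct ℤ M N) :=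
  fun f => Finsupp.mapDomain Nat.succ f

/-- The Frobenius on `⊕_{k≥0} (M ⊗ N)·Vᵏ`. -/
noncomputable def boxF (p : ℕ) (FM : M →+ M) (FN : N →+ N) :
    (ℕ →₀ TensorProduct ℤ M N) → (ℕ →₀ TensorProduct ℤ M N) :=
  fun f =>
    Finsupp.single 0 (TensorProduct.map FM.toIntLinearMap FN.toIntLinearMap (f 0)) +
      p • Finsupp.comapDomain Nat.succ f (Nat.succ_injective.injOn)

end Box


open scoped TensorProduct

section AuxV
variable {Q : Type*} [AddCommGroup Q]

def Vpow (V : Q →+ Q) : ℕ → Q →+ Q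
  | 0 => AddMonoidHom.id Q
  | k + 1 => (Vpow V k).comp V

lemma Vpow_succ (V : Q →+ Q) (k : ℕ) (q : Q) : Vpow V (k + 1) q = Vpow V k (V q) := rfl

lemma Vpow_comm (V : Q →+ Q) (k : ℕ) (q : Q) : V (Vpow V k q) = Vpow V k (V q) := by
  induction k generalizing q with
  | zero => rfl
  | succ k ih => simpa [Vpow_succ] using ih (V q)

lemma Vpow_succ' (V : Q →+ Q) (k : ℕ) (q : Q) : Vpow V (k + 1) q = V (Vpow V k q) := by
  rw [Vpow_succ, Vpow_comm]
end AuxV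

section AuxBox
variable {M N : Type*} [AddCommGroup M] [AddCommGroup N]

lemma boxV_single (k : ℕ) (x : TensorProduct ℤ M N) :
    boxV (Finsupp.single k x) = Finsupp.single (k + 1) x := by
  simp [boxV, Finsupp.mapDomain_single]

lemma boxV_add (a b : ℕ →₀ TensorProduct ℤ M N) : boxV (a + b) = boxV a + boxV b :=
  Finsupp.mapDomain_add

lemma boxF_single_zero (p : ℕ) (FM : M →+ M) (FN : N →+ N) (x : TensorProduct ℤ M N) :
    boxF p FM FN (Finsupp.single 0 x) =
      Finsupp.single 0 (TensorProduct.map FM.toIntLinearMap FN.toIntLinearMap x) := by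
  have h : Finsupp.comapDomain Nat.succ (Finsupp.single (0:ℕ) x) Nat.succ_injective.injOn = 0 := by
    ext a
    simp [Finsupp.comapDomain_apply, Finsupp.single_apply]
  simp [boxF, h]

lemma boxF_single_succ (p : ℕ) (FM : M →+ M) (FN : N →+ N) (k : ℕ) (x : TensorProduct ℤ M N) :
    boxF p FM FN (Finsupp.single (k + 1) x) = p • Finsupp.single k x := by
  have h : Finsupp.comapDomain Nat.succ (Finsupp.single (k+1:ℕ) x) Nat.succ_injective.injOn =
      Finsupp.single k x := by
    ext a
    simp [Finsupp.comapDomain_apply, Finsupp.single_apply, Nat.succ_eq_add_one]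
  simp [boxF, h]

lemma boxF_add (p : ℕ) (FM : M →+ M) (FN : N →+ N) (a b : ℕ →₀ TensorProduct ℤ M N) :
    boxF p FM FN (a + b) = boxF p FM FN a + boxF p FM FN b := by
  simp only [boxF, Finsupp.add_apply, map_add, Finsupp.single_add,
    Finsupp.comapDomain_add_of_injective Nat.succ_injective, smul_add]
  abel

end AuxBox

section AuxPsi
variable {M N Q : Type*} [AddCommGroup M] [AddCommGroup N] [AddCommGroup Q]

noncomputable def psi0 (b : M → N → Q)
    (hb1 : ∀ x x' y, b (x + x') y = b x y + b x' y)
    (hb2 : ∀ x y y', b x (y + y') = b x y + b x y') : TensorProduct ℤ M N →+ Q :=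
  TensorProduct.liftAddHom
    (AddMonoidHom.mk' (fun x => AddMonoidHom.mk' (b x) (hb2 x))
      (fun x x' => AddMonoidHom.ext fun y => hb1 x x' y))
    (fun r m n => by
      rw [map_zsmul, AddMonoidHom.smul_apply, ← map_zsmul])

lemma psi0_tmul (b : M → N → Q) (hb1) (hb2) (x : M) (y : N) :
    psi0 b hb1 hb2 (x ⊗ₜ[ℤ] y) = b x y := rfl

end AuxPsi

/-- Cartier module homomorphisms `M ⊠ N → Q` correspond bijectively to
`(V,F)`-bilinear maps `M × N → Q`, via `φ ↦ ((x,y) ↦ φ((x ⊗ y)V⁰))`.  Here `F'` and `V'`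
denote the (unique) descended Cartier operators on `M ⊠ N`. -/
theorem stmt_6 (p : ℕ) (hp : p.Prime)
    {M N Q : Type*} [AddCommGroup M] [AddCommGroup N] [AddCommGroup Q]
    (FM VM : M →+ M) (FN VN : N →+ N) (FQ VQ : Q →+ Q)
    (hM : ∀ x, FM (VM x) = p • x) (hN : ∀ x, FN (VN x) = p • x)
    (hQ : ∀ x, FQ (VQ x) = p • x)
    (F' V' : (ℕ →₀ TensorProduct ℤ M N) ⧸ boxRel FM VM FN VN →+
      (ℕ →₀ TensorProduct ℤ M N) ⧸ boxRel FM VM FN VN)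
    (hF' : ∀ t, F' (QuotientAddGroup.mk t) = QuotientAddGroup.mk (boxF p FM FN t))
    (hV' : ∀ t, V' (QuotientAddGroup.mk t) = QuotientAddGroup.mk (boxV t)) :
    -- (a) restriction of a Cartier module homomorphism is a (V,F)-bilinear map
    (∀ φ : (ℕ →₀ TensorProduct ℤ M N) ⧸ boxRel FM VM FN VN →+ Q,
      (∀ x, φ (F' x) = FQ (φ x)) → (∀ x, φ (V' x) = VQ (φ x)) →
      let b : M → N → Q := fun x y =>
        φ (QuotientAddGroup.mk (Finsupp.single 0 (x ⊗ₜ[ℤ] y)))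
      (∀ x x' y, b (x + x') y = b x y + b x' y) ∧
      (∀ x y y', b x (y + y') = b x y + b x y') ∧
      (∀ x y, FQ (b x y) = b (FM x) (FN y)) ∧
      (∀ x y, VQ (b x (FN y)) = b (VM x) y) ∧
      (∀ x y, VQ (b (FM x) y) = b x (VN y))) ∧
    -- (b) every (V,F)-bilinear map extends uniquely to a Cartier module homomorphism
    (∀ b : M → N → Q,
      (∀ x x' y, b (x + x') y = b x y + b x' y) →
      (∀ x y y', b x (y + y') = b x y + b x y') →
      (∀ x y, FQ (b x y) = b (FM x) (FN y)) →
      (∀ x y, VQ (b x (FN y)) = b (VM x) y) →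
      (∀ x y, VQ (b (FM x) y) = b x (VN y)) →
      ∃! φ : (ℕ →₀ TensorProduct ℤ M N) ⧸ boxRel FM VM FN VN →+ Q,
        (∀ x, φ (F' x) = FQ (φ x)) ∧ (∀ x, φ (V' x) = VQ (φ x)) ∧
        ∀ x y, φ (QuotientAddGroup.mk (Finsupp.single 0 (x ⊗ₜ[ℤ] y))) = b x y) := by
  constructor
  · -- (a)
    intro φ hF hV
    refine ⟨?_, ?_, ?_, ?_, ?_⟩
    · intro x x' y
      show φ (QuotientAddGroup.mk (Finsupp.single 0 ((x + x') ⊗ₜ[ℤ] y))) = _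
      rw [TensorProduct.add_tmul, Finsupp.single_add, QuotientAddGroup.mk_add, map_add]
    · intro x y y'
      show φ (QuotientAddGroup.mk (Finsupp.single 0 (x ⊗ₜ[ℤ] (y + y')))) = _
      rw [TensorProduct.tmul_add, Finsupp.single_add, QuotientAddGroup.mk_add, map_add]
    · intro x y
      show FQ (φ (QuotientAddGroup.mk (Finsupp.single 0 (x ⊗ₜ[ℤ] y)))) =
        φ (QuotientAddGroup.mk (Finsupp.single 0 (FM x ⊗ₜ[ℤ] FN y)))
      rw [← hF, hF', boxF_single_zero, TensorProduct.map_tmul]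
      rfl
    · intro x y
      show VQ (φ (QuotientAddGroup.mk (Finsupp.single 0 (x ⊗ₜ[ℤ] FN y)))) =
        φ (QuotientAddGroup.mk (Finsupp.single 0 (VM x ⊗ₜ[ℤ] y)))
      rw [← hV, hV', boxV_single]
      congr 1
      refine QuotientAddGroup.eq.mpr ?_
      rw [neg_add_eq_sub]
      exact AddSubgroup.subset_closure (Or.inr ⟨x, y, 0, rfl⟩)
    · intro x y
      show VQ (φ (QuotientAddGroup.mk (Finsupp.single 0 (FM x ⊗ₜ[ℤ] y)))) =
        φ (QuotientAddGroup.mk (Finsupp.single 0 (x ⊗ₜ[ℤ] VN y)))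
      rw [← hV, hV', boxV_single]
      congr 1
      refine QuotientAddGroup.eq.mpr ?_
      rw [neg_add_eq_sub]
      exact AddSubgroup.subset_closure (Or.inl ⟨x, y, 0, rfl⟩)
  · -- (b)
    intro b hb1 hb2 hbF hbV1 hbV2
    set ψ : TensorProduct ℤ M N →+ Q := psi0 b hb1 hb2 with hψ
    set Psi : (ℕ →₀ TensorProduct ℤ M N) →+ Q :=
      Finsupp.liftAddHom (fun k => (Vpow VQ k).comp ψ) with hPsidef
    have hPsi_single : ∀ (k : ℕ) x, Psi (Finsupp.single k x) = Vpow VQ k (ψ x) :=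
      fun k x => Finsupp.liftAddHom_apply_single _ k x
    have hker : boxRel FM VM FN VN ≤ Psi.ker := by
      rw [boxRel, AddSubgroup.closure_le]
      rintro z (⟨m, n, k, rfl⟩ | ⟨m, n, k, rfl⟩) <;>
        simp only [SetLike.mem_coe, AddMonoidHom.mem_ker, map_sub, hPsi_single, Vpow_succ,
          psi0_tmul, sub_eq_zero, ← hψ]
      · rw [psi0_tmul, psi0_tmul, hbV2]
      · rw [psi0_tmul, psi0_tmul, hbV1]
    have hψF : ∀ z, ψ (TensorProduct.map FM.toIntLinearMap FN.toIntLinearMap z) = FQ (ψ z) := by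
      intro z
      induction z using TensorProduct.induction_on with
      | zero => simp
      | tmul m n =>
          rw [TensorProduct.map_tmul]
          show ψ (FM m ⊗ₜ[ℤ] FN n) = _
          rw [hψ, psi0_tmul, psi0_tmul, hbF]
      | add a c iha ihc => simp only [map_add, iha, ihc]
    have hPsiF : ∀ t, Psi (boxF p FM FN t) = FQ (Psi t) := by
      intro t
      refine Finsupp.induction t ?_ ?_
      · have : boxF p FM FN (0 : ℕ →₀ TensorProduct ℤ M N) = 0 := by
          simp [boxF]
        rw [this, map_zero, map_zero]
      · intro k x f _ _ ih
        rw [boxF_add, map_add, map_add, map_add, ih]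
        congr 1
        cases k with
        | zero =>
            rw [boxF_single_zero, hPsi_single, hPsi_single]
            exact hψF x
        | succ k =>
            rw [boxF_single_succ, map_nsmul, hPsi_single, hPsi_single, Vpow_succ', hQ]
    have hPsiV : ∀ t, Psi (boxV t) = VQ (Psi t) := by
      intro t
      refine Finsupp.induction t ?_ ?_
      · have : boxV (0 : ℕ →₀ TensorProduct ℤ M N) = 0 := Finsupp.mapDomain_zero
        rw [this, map_zero, map_zero]
      · intro k x f _ _ ih
        rw [boxV_add, map_add, map_add, map_add, ih, boxV_single, hPsi_single, hPsi_single,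
          Vpow_succ']
    refine ⟨QuotientAddGroup.lift _ Psi hker, ⟨?_, ?_, ?_⟩, ?_⟩
    · intro x
      refine QuotientAddGroup.induction_on x fun t => ?_
      rw [hF', QuotientAddGroup.lift_mk, QuotientAddGroup.lift_mk, hPsiF]
    · intro x
      refine QuotientAddGroup.induction_on x fun t => ?_
      rw [hV', QuotientAddGroup.lift_mk, QuotientAddGroup.lift_mk, hPsiV]
    · intro x y
      rw [QuotientAddGroup.lift_mk, hPsi_single]
      exact psi0_tmul b hb1 hb2 x y
    · rintro φ' ⟨h1, h2, h3⟩
      have key0 : ∀ z, φ' (QuotientAddGroup.mk (Finsupp.single 0 z)) = ψ z := by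
        intro z
        induction z using TensorProduct.induction_on with
        | zero => simp
        | tmul m n => rw [h3, hψ, psi0_tmul]
        | add a c iha ihc =>
            rw [Finsupp.single_add, QuotientAddGroup.mk_add, map_add, map_add, iha, ihc]
      have key : ∀ (k : ℕ) z,
          φ' (QuotientAddGroup.mk (Finsupp.single k z)) = Vpow VQ k (ψ z) := by
        intro k
        induction k with
        | zero => exact key0
        | succ k ih =>
            intro z
            rw [← boxV_single, ← hV', h2, ih, Vpow_succ']
      have keyt : ∀ t, φ' (QuotientAddGroup.mk t) = Psi t := by
        intro t
        refine Finsupp.induction t ?_ ?_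
        · simp
        · intro k x f _ _ ih
          rw [QuotientAddGroup.mk_add, map_add, map_add, ih, key, hPsi_single]
      refine AddMonoidHom.ext fun x => ?_
      refine QuotientAddGroup.induction_on x fun t => ?_
      rw [keyt, QuotientAddGroup.lift_mk]
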